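/- arXiv:2604.27742 — 4 statements merged into one kernel-verified Lean document; each statement's English description precedes it below -/
import Mathlib

section
/- The symmetric linear-core surrogate Φ̄ is a convex function on ℝ. -/
/-! Write `c = Φ'(0)` and let `D x = Φ x - Φ 0 - c x` be the gap between `Φ` and its tangent
at `0`. Then `Φ̄ u = (1 - u + Φ 0 / c) + (D (1 - max u 1) + D (-1 - min u (-1))) / c`.
The gap `D` is convex and, by the tangent-line inequality, minimal at `0`; so `x ↦ D (1 - x)`
is convex and nondecreasing on `[1, ∞)`, and composing it with the convex map `u ↦ max u 1`
keeps it convex. The left piece is symmetric, with the concave map `u ↦ min u (-1)`. -/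

/-- The symmetric linear-core surrogate `Φ̄` built from a base function `Φ`:
`Φ̄(u) = -u + 1 + Φ(0)/Φ'(0)` for `-1 ≤ u ≤ 1`, `Φ̄(u) = Φ(1-u)/Φ'(0)` for `u > 1`,
and `Φ̄(u) = Φ(-1-u)/Φ'(0) + 2` for `u < -1`. -/
noncomputable def barPhi (Φ : ℝ → ℝ) (u : ℝ) : ℝ :=
  if 1 < u then Φ (1 - u) / deriv Φ 0
  else if u < -1 then Φ (-1 - u) / deriv Φ 0 + 2
  else -u + 1 + Φ 0 / deriv Φ 0

open Set

section ConvexReal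

variable {f : ℝ → ℝ} {s : Set ℝ} {a m : ℝ}

theorem ConvexOn.add_deriv_mul_sub_le (hf : ConvexOn ℝ s f) (ha : a ∈ s)
    (hfd : DifferentiableAt ℝ f a) {x : ℝ} (hx : x ∈ s) :
    f a + deriv f a * (x - a) ≤ f x := by
  rcases lt_trichotomy x a with hxa | rfl | hax
  · have hslope := hf.slope_le_deriv hx ha hxa hfd
    rw [slope_def_field, div_le_iff₀ (sub_pos.2 hxa)] at hslope
    linarith
  · simp
  · have hslope := hf.deriv_le_slope ha hx hax hfd
    rw [slope_def_field, le_div_iff₀ (sub_pos.2 hax)] at hslope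
    linarith

noncomputable def tangentGap (f : ℝ → ℝ) (a x : ℝ) : ℝ :=
  f x - (f a + deriv f a * (x - a))

theorem convexOn_tangentGap (hf : ConvexOn ℝ s f) (a : ℝ) : ConvexOn ℝ s (tangentGap f a) :=
  hf.sub ((((LinearMap.mulLeft ℝ (deriv f a)).concaveOn hf.1).add_const
    (f a - deriv f a * a)).congr fun x _ ↦ by simp; ring)

theorem ConvexOn.isMinOn_tangentGap (hf : ConvexOn ℝ s f) (ha : a ∈ s)
    (hfd : DifferentiableAt ℝ f a) : IsMinOn (tangentGap f a) s a := fun x hx ↦ by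
  simpa [tangentGap] using hf.add_deriv_mul_sub_le ha hfd hx

theorem ConvexOn.monotoneOn_of_isMinOn (hf : ConvexOn ℝ s f) (hms : m ∈ s)
    (hm : IsMinOn f s m) :
    MonotoneOn f (s ∩ Ici m) := by
  rintro y ⟨hys, hmy⟩ z ⟨hzs, -⟩ hyz
  rcases (mem_Ici.1 hmy).eq_or_lt with rfl | hmy
  · exact hm hzs
  · exact hf.le_right_of_left_le'' hms hzs hmy hyz (hm hys)

theorem ConvexOn.antitoneOn_of_isMinOn (hf : ConvexOn ℝ s f) (hms : m ∈ s)
    (hm : IsMinOn f s m) :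
    AntitoneOn f (s ∩ Iic m) := by
  rintro y ⟨hys, hym⟩ z ⟨hzs, hzm⟩ hyz
  rcases (mem_Iic.1 hzm).eq_or_lt with rfl | hzm
  · exact hm hys
  · exact hf.le_left_of_right_le'' hys hms hyz hzm (hm hzs)

theorem ConvexOn.comp_max_of_isMinOn (hf : ConvexOn ℝ univ f) (hm : IsMinOn f univ m) :
    ConvexOn ℝ univ (fun x ↦ f (max x m)) := by
  have himage : (fun x ↦ max x m) '' univ = Ici m := by
    ext y
    refine ⟨?_, fun hy ↦ ⟨y, mem_univ y, max_eq_left hy⟩⟩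
    rintro ⟨x, -, rfl⟩
    exact le_max_right x m
  refine ConvexOn.comp ?_ ((convexOn_id convex_univ).sup (convexOn_const m convex_univ)) ?_
  · rw [himage]
    exact hf.subset (subset_univ _) (convex_Ici m)
  · rw [himage, ← univ_inter (Ici m)]
    exact hf.monotoneOn_of_isMinOn (mem_univ m) hm

theorem ConvexOn.comp_min_of_isMinOn (hf : ConvexOn ℝ univ f) (hm : IsMinOn f univ m) :
    ConvexOn ℝ univ (fun x ↦ f (min x m)) := by
  have himage : (fun x ↦ min x m) '' univ = Iic m := by
    ext y
    refine ⟨?_, fun hy ↦ ⟨y, mem_univ y, min_eq_left hy⟩⟩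
    rintro ⟨x, -, rfl⟩
    exact min_le_right x m
  refine ConvexOn.comp_concaveOn ?_
    ((concaveOn_id convex_univ).inf (concaveOn_const m convex_univ)) ?_
  · rw [himage]
    exact hf.subset (subset_univ _) (convex_Iic m)
  · rw [himage, ← univ_inter (Iic m)]
    exact hf.antitoneOn_of_isMinOn (mem_univ m) hm

theorem ConvexOn.comp_const_sub (hf : ConvexOn ℝ univ f) (a : ℝ) :
    ConvexOn ℝ univ (fun x ↦ f (a - x)) := by
  refine ⟨convex_univ, fun x _ y _ p q hp hq hpq ↦ ?_⟩
  have hcomb : a - (p • x + q • y) = p • (a - x) + q • (a - y) := by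
    simp only [smul_eq_mul]; linear_combination a * hpq.symm
  simpa only [hcomb] using hf.2 (mem_univ (a - x)) (mem_univ (a - y)) hp hq hpq

end ConvexReal

theorem barPhi_eq_tangentGap {Φ : ℝ → ℝ} (hd0 : deriv Φ 0 ≠ 0) (u : ℝ) :
    barPhi Φ u = -u + (1 + Φ 0 / deriv Φ 0) +
      (deriv Φ 0)⁻¹ * (tangentGap Φ 0 (1 - max u 1) + tangentGap Φ 0 (-1 - min u (-1))) := by
  simp only [barPhi, tangentGap]
  split_ifs with hu₁ hu₂
  · rw [max_eq_left hu₁.le, min_eq_right (by linarith)]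
    field_simp
    ring_nf
  · rw [max_eq_right (by linarith), min_eq_left hu₂.le]
    field_simp
    ring_nf
  · rw [max_eq_right (not_lt.1 hu₁), min_eq_right (not_lt.1 hu₂)]
    field_simp
    ring_nf

theorem barPhi_convex_general (Φ : ℝ → ℝ)
    (hconv : ConvexOn ℝ Set.univ Φ) (hd0 : 0 < deriv Φ 0) :
    ConvexOn ℝ Set.univ (barPhi Φ) := by
  have hgap := convexOn_tangentGap hconv 0
  have hmin := hconv.isMinOn_tangentGap (mem_univ 0) (differentiableAt_of_deriv_ne_zero hd0.ne')
  have hright : ConvexOn ℝ univ (fun u ↦ tangentGap Φ 0 (1 - max u 1)) :=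
    (hgap.comp_const_sub 1).comp_max_of_isMinOn fun x _ ↦ by
      simpa using hmin (mem_univ (1 - x))
  have hleft : ConvexOn ℝ univ (fun u ↦ tangentGap Φ 0 (-1 - min u (-1))) :=
    (hgap.comp_const_sub (-1)).comp_min_of_isMinOn fun x _ ↦ by
      simpa using hmin (mem_univ (-1 - x))
  have hcore : ConvexOn ℝ univ (fun u ↦ -u + (1 + Φ 0 / deriv Φ 0)) :=
    (concaveOn_id convex_univ).neg.add_const _
  exact (hcore.add ((hright.add hleft).smul (inv_nonneg.2 hd0.le))).congr
    fun u _ ↦ (barPhi_eq_tangentGap hd0.ne' u).symm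

/-- The symmetric linear-core surrogate `Φ̄` is convex on `ℝ`. -/
theorem barPhi_convex (Φ : ℝ → ℝ)
    (hconv : ConvexOn ℝ Set.univ Φ) (hdiff : Differentiable ℝ Φ)
    (hnn : ∀ u, 0 ≤ Φ u) (hd0 : 0 < deriv Φ 0) :
    ConvexOn ℝ Set.univ (barPhi Φ) :=
  barPhi_convex_general Φ hconv hd0
end

section
/- Let Y be a finite type with at least two elements and fix y ∈ Y. For φ equal to either the symmetric linear-core surrogate Φ̄ or the one-sided linear-core surrogate Φ̃, the multi-class sum loss L : (Y → ℝ) → ℝ defined by L(v) = Σ_{y' ≠ y} φ(v(y) − v(y')) is convex, and it is continuously differentiable as a function on the Euclidean space ℝ^Y. -/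
/-- The one-sided linear-core surrogate `Φ̃`. -/
noncomputable def tildePhi (Φ : ℝ → ℝ) (u : ℝ) : ℝ :=
  if 1 < u then Φ (1 - u) / deriv Φ 0
  else -u + 1 + Φ 0 / deriv Φ 0

/-!
Both surrogates glue `Φ(±1 - u) / Φ'(0)` to the line of slope `-1` at points where the slopes
agree, so they are differentiable; their derivatives are maxima and minima of the monotone
functions `u ↦ -Φ'(±1 - u) / Φ'(0)` and `-1`. Since `Φ'` is monotone (convexity) and hence
continuous (Darboux), each surrogate has a monotone continuous derivative, i.e. is convex and `C¹`.
The loss is a sum of such a function composed with linear forms.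
-/

open Set

/-- Darboux's theorem makes the range of the strictly monotone function `deriv f + id` (the
derivative of `f x + x ^ 2 / 2`) order-connected, so that function is a topological embedding. -/
theorem continuous_deriv_of_monotone {f : ℝ → ℝ} (hf : Differentiable ℝ f)
    (hmono : Monotone (deriv f)) : Continuous (deriv f) := by
  have hderiv : deriv (fun x => f x + x ^ 2 / 2) = fun x => deriv f x + x := by
    funext x
    exact ((hf x).hasDerivAt.add ((hasDerivAt_pow 2 x).div_const 2)).deriv.trans (by simp)
  have hrange : OrdConnected (range fun x => deriv f x + x) := by
    rw [← hderiv, ← image_univ]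
    exact ordConnected_univ.image_deriv fun x _ => by fun_prop
  have hembed := (hmono.add_strictMono strictMono_id).isEmbedding_of_ordConnected hrange
  exact (hembed.continuous.sub continuous_id).congr fun x => add_sub_cancel_right _ _

theorem hasDerivAt_of_eqOn_Iic_of_eqOn_Ici {F f g D : ℝ → ℝ} {a : ℝ}
    (hf : ∀ x ≤ a, HasDerivAt f (D x) x) (hg : ∀ x ≥ a, HasDerivAt g (D x) x)
    (hFf : EqOn F f (Iic a)) (hFg : EqOn F g (Ici a)) (x : ℝ) : HasDerivAt F (D x) x := by
  rcases lt_trichotomy x a with hx | rfl | hx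
  · exact (hf x hx.le).congr_of_eventuallyEq <|
      Filter.eventually_of_mem (Iic_mem_nhds hx) fun y hy => hFf hy
  · have hleft := (hf x le_rfl).hasDerivWithinAt.congr hFf (hFf self_mem_Iic)
    have hright := (hg x le_rfl).hasDerivWithinAt.congr hFg (hFg self_mem_Ici)
    simpa using hleft.union hright
  · exact (hg x hx.le).congr_of_eventuallyEq <|
      Filter.eventually_of_mem (Ici_mem_nhds hx) fun y hy => hFg hy

theorem convexOn_univ_and_contDiff_one_of_hasDerivAt {f D : ℝ → ℝ}
    (hf : ∀ x, HasDerivAt f (D x) x) (hcont : Continuous D) (hmono : Monotone D) :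
    ConvexOn ℝ univ f ∧ ContDiff ℝ 1 f := by
  have hderiv : deriv f = D := funext fun x => (hf x).deriv
  have hdiff : Differentiable ℝ f := fun x => (hf x).differentiableAt
  exact ⟨(hderiv ▸ hmono).convexOn_univ_of_deriv hdiff,
    contDiff_one_iff_deriv.mpr ⟨hdiff, hderiv ▸ hcont⟩⟩

/-- Equal to `-1` for `u ≤ 1` and to the slope `-Φ'(1 - u) / Φ'(0)` of `Φ(1 - u) / Φ'(0)` for
`u ≥ 1`, once `Φ'` is monotone with `Φ'(0) > 0`. -/
noncomputable def tildePhiDeriv (Φ : ℝ → ℝ) (u : ℝ) : ℝ :=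
  max (-1) (-deriv Φ (1 - u) / deriv Φ 0)

/-- Agrees with `tildePhiDeriv` for `u ≥ -1` and with the slope `-Φ'(-1 - u) / Φ'(0)` of
`Φ(-1 - u) / Φ'(0) + 2` for `u ≤ -1`. -/
noncomputable def barPhiDeriv (Φ : ℝ → ℝ) (u : ℝ) : ℝ :=
  min (tildePhiDeriv Φ u) (-deriv Φ (-1 - u) / deriv Φ 0)

variable {Φ : ℝ → ℝ}

theorem hasDerivAt_comp_const_sub_div (hdiff : Differentiable ℝ Φ) (c u : ℝ) :
    HasDerivAt (fun u => Φ (c - u) / deriv Φ 0) (-deriv Φ (c - u) / deriv Φ 0) u := by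
  simpa [neg_div] using
    ((hdiff (c - u)).hasDerivAt.comp u ((hasDerivAt_id u).const_sub c)).div_const (deriv Φ 0)

section MonotoneDeriv

variable (hmono : Monotone (deriv Φ)) (hd0 : 0 < deriv Φ 0)
include hmono hd0

theorem neg_deriv_div_le_neg_one {w : ℝ} (hw : 0 ≤ w) : -deriv Φ w / deriv Φ 0 ≤ -1 := by
  rw [div_le_iff₀ hd0]
  linarith [hmono hw]

theorem neg_one_le_neg_deriv_div {w : ℝ} (hw : w ≤ 0) : -1 ≤ -deriv Φ w / deriv Φ 0 := by
  rw [le_div_iff₀ hd0]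
  linarith [hmono hw]

theorem antitone_neg_deriv_div : Antitone fun w => -deriv Φ w / deriv Φ 0 :=
  fun _ _ hab => div_le_div_of_nonneg_right (neg_le_neg (hmono hab)) hd0.le

theorem monotone_tildePhiDeriv : Monotone (tildePhiDeriv Φ) := fun _ _ huv =>
  max_le_max le_rfl (antitone_neg_deriv_div hmono hd0 (by linarith))

theorem monotone_barPhiDeriv : Monotone (barPhiDeriv Φ) := fun _ _ huv =>
  min_le_min (monotone_tildePhiDeriv hmono hd0 huv)
    (antitone_neg_deriv_div hmono hd0 (by linarith))

theorem hasDerivAt_tildePhi (hdiff : Differentiable ℝ Φ) (u : ℝ) :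
    HasDerivAt (tildePhi Φ) (tildePhiDeriv Φ u) u := by
  refine hasDerivAt_of_eqOn_Iic_of_eqOn_Ici (a := 1) (f := fun u => -u + 1 + Φ 0 / deriv Φ 0)
    (g := fun u => Φ (1 - u) / deriv Φ 0)
    (fun x hx => ?_) (fun x hx => ?_) (fun x hx => ?_) (fun x hx => ?_) u
  · rw [tildePhiDeriv, max_eq_left (neg_deriv_div_le_neg_one hmono hd0 (by linarith))]
    exact ((hasDerivAt_neg x).add_const 1).add_const _
  · rw [tildePhiDeriv, max_eq_right (neg_one_le_neg_deriv_div hmono hd0 (by linarith))]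
    exact hasDerivAt_comp_const_sub_div hdiff 1 x
  · simp [tildePhi, not_lt.mpr (mem_Iic.mp hx)]
  · rcases (mem_Ici.mp hx).eq_or_lt with rfl | hx
    · simp [tildePhi]
    · simp [tildePhi, hx]

theorem hasDerivAt_barPhi (hdiff : Differentiable ℝ Φ) (u : ℝ) :
    HasDerivAt (barPhi Φ) (barPhiDeriv Φ u) u := by
  refine hasDerivAt_of_eqOn_Iic_of_eqOn_Ici (a := -1)
    (f := fun u => Φ (-1 - u) / deriv Φ 0 + 2) (g := tildePhi Φ)
    (fun x hx => ?_) (fun x hx => ?_) (fun x hx => ?_) (fun x hx => ?_) u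
  · have hle : -deriv Φ (-1 - x) / deriv Φ 0 ≤ tildePhiDeriv Φ x :=
      (neg_deriv_div_le_neg_one hmono hd0 (by linarith)).trans (le_max_left _ _)
    rw [barPhiDeriv, min_eq_right hle]
    exact (hasDerivAt_comp_const_sub_div hdiff (-1) x).add_const 2
  · have hle : tildePhiDeriv Φ x ≤ -deriv Φ (-1 - x) / deriv Φ 0 :=
      max_le (neg_one_le_neg_deriv_div hmono hd0 (by linarith))
        (antitone_neg_deriv_div hmono hd0 (by linarith))
    rw [barPhiDeriv, min_eq_left hle]
    exact hasDerivAt_tildePhi hmono hd0 hdiff x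
  · rcases (mem_Iic.mp hx).eq_or_lt with rfl | hx
    · norm_num [barPhi]
      ring
    · simp [barPhi, hx, not_lt.mpr (by linarith : x ≤ 1)]
  · simp [barPhi, tildePhi, not_lt.mpr (mem_Ici.mp hx : -1 ≤ x)]

end MonotoneDeriv

theorem continuous_tildePhiDeriv (hcont : Continuous (deriv Φ)) :
    Continuous (tildePhiDeriv Φ) := by
  unfold tildePhiDeriv
  fun_prop

theorem continuous_barPhiDeriv (hcont : Continuous (deriv Φ)) :
    Continuous (barPhiDeriv Φ) := by
  unfold barPhiDeriv
  have := continuous_tildePhiDeriv hcont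
  fun_prop

theorem convexOn_univ_sum_comp_sub {Y : Type*} {φ : ℝ → ℝ} (hφ : ConvexOn ℝ univ φ)
    (s : Finset Y) (y : Y) : ConvexOn ℝ univ fun v : Y → ℝ => ∑ y' ∈ s, φ (v y - v y') := by
  rw [← Finset.sum_fn]
  refine Finset.sum_induction _ (ConvexOn ℝ univ) (fun _ _ => ConvexOn.add)
    (convexOn_const 0 convex_univ) fun y' _ => ?_
  exact hφ.comp_linearMap ((LinearMap.proj y : (Y → ℝ) →ₗ[ℝ] ℝ) - LinearMap.proj y')

theorem multiclass_sum_loss_convex_smooth_general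
    {Y : Type*} [Fintype Y] [DecidableEq Y] (y : Y)
    (Φ : ℝ → ℝ) (hconv : ConvexOn ℝ Set.univ Φ) (hdiff : Differentiable ℝ Φ)
    (hd0 : 0 < deriv Φ 0)
    (φ : ℝ → ℝ) (hφ : φ = barPhi Φ ∨ φ = tildePhi Φ) :
    ConvexOn ℝ Set.univ
      (fun v : Y → ℝ => ∑ y' ∈ Finset.univ.erase y, φ (v y - v y')) ∧
    ContDiff ℝ 1
      (fun v : EuclideanSpace ℝ Y => ∑ y' ∈ Finset.univ.erase y, φ (v y - v y')) := by
  have hmono : Monotone (deriv Φ) :=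
    monotoneOn_univ.mp (hconv.monotoneOn_deriv fun x _ => hdiff x)
  have hcont : Continuous (deriv Φ) := continuous_deriv_of_monotone hdiff hmono
  obtain ⟨hφconv, hφsmooth⟩ : ConvexOn ℝ univ φ ∧ ContDiff ℝ 1 φ := by
    rcases hφ with rfl | rfl
    · exact convexOn_univ_and_contDiff_one_of_hasDerivAt (hasDerivAt_barPhi hmono hd0 hdiff)
        (continuous_barPhiDeriv hcont) (monotone_barPhiDeriv hmono hd0)
    · exact convexOn_univ_and_contDiff_one_of_hasDerivAt (hasDerivAt_tildePhi hmono hd0 hdiff)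
        (continuous_tildePhiDeriv hcont) (monotone_tildePhiDeriv hmono hd0)
  exact ⟨convexOn_univ_sum_comp_sub hφconv _ y,
    ContDiff.sum fun y' _ => hφsmooth.comp (by fun_prop)⟩

/-- for a finite label set `Y` with at least two elements, a fixed label `y`,
and `φ ∈ {Φ̄, Φ̃}`, the multi-class sum loss `L(v) = ∑_{y' ≠ y} φ(v(y) - v(y'))` is convex,
and is continuously differentiable as a function on the Euclidean space `ℝ^Y`. -/
theorem multiclass_sum_loss_convex_smooth
    {Y : Type*} [Fintype Y] [DecidableEq Y] (hY : 1 < Fintype.card Y) (y : Y)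
    (Φ : ℝ → ℝ) (hconv : ConvexOn ℝ Set.univ Φ) (hdiff : Differentiable ℝ Φ)
    (hnn : ∀ u, 0 ≤ Φ u) (hd0 : 0 < deriv Φ 0)
    (φ : ℝ → ℝ) (hφ : φ = barPhi Φ ∨ φ = tildePhi Φ) :
    ConvexOn ℝ Set.univ
      (fun v : Y → ℝ => ∑ y' ∈ Finset.univ.erase y, φ (v y - v y')) ∧
    ContDiff ℝ 1
      (fun v : EuclideanSpace ℝ Y => ∑ y' ∈ Finset.univ.erase y, φ (v y - v y')) :=
  multiclass_sum_loss_convex_smooth_general y Φ hconv hdiff hd0 φ hφ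
end

section
/- Define T : [0, 1] → ℝ by T(t) = Φ̄(0) − inf_{u ∈ ℝ} ( ((1 − t)/2) · Φ̄(−u) + ((1 + t)/2) · Φ̄(u) ). Then T(t) ≥ t for all t ∈ [0, 1], and T(0) = 0. -/
/-- The `H`-estimation error transformation
`T(t) = Φ̄(0) - inf_u ((1-t)/2 · Φ̄(-u) + (1+t)/2 · Φ̄(u))`. -/
noncomputable def Tbar (Φ : ℝ → ℝ) (t : ℝ) : ℝ :=
  barPhi Φ 0 - ⨅ u : ℝ, ((1 - t) / 2 * barPhi Φ (-u) + (1 + t) / 2 * barPhi Φ u)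

open Set

theorem ConvexOn.two_mul_apply_zero_le {f : ℝ → ℝ} (hf : ConvexOn ℝ univ f) (x : ℝ) :
    2 * f 0 ≤ f x + f (-x) := by
  have h := hf.2 (mem_univ x) (mem_univ (-x)) (by norm_num : (0 : ℝ) ≤ 1 / 2)
    (by norm_num : (0 : ℝ) ≤ 1 / 2) (by norm_num)
  simp only [smul_eq_mul] at h
  rw [show 1 / 2 * x + 1 / 2 * -x = (0 : ℝ) by ring] at h
  linarith

section

variable {Φ : ℝ → ℝ} {u : ℝ}

theorem barPhi_of_one_lt (hu : 1 < u) : barPhi Φ u = Φ (1 - u) / deriv Φ 0 := by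
  rw [barPhi, if_pos hu]

theorem barPhi_of_lt_neg_one (hu : u < -1) : barPhi Φ u = Φ (-1 - u) / deriv Φ 0 + 2 := by
  rw [barPhi, if_neg (by linarith), if_pos hu]

theorem barPhi_of_mem_Icc (hu : u ∈ Icc (-1) 1) : barPhi Φ u = -u + 1 + Φ 0 / deriv Φ 0 := by
  rw [barPhi, if_neg (by linarith [hu.2]), if_neg (by linarith [hu.1])]

theorem barPhi_zero : barPhi Φ 0 = 1 + Φ 0 / deriv Φ 0 := by
  rw [barPhi_of_mem_Icc (by norm_num)]; ring

theorem barPhi_one : barPhi Φ 1 = Φ 0 / deriv Φ 0 := by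
  rw [barPhi_of_mem_Icc (by norm_num)]; ring

theorem barPhi_neg_one : barPhi Φ (-1) = 2 + Φ 0 / deriv Φ 0 := by
  rw [barPhi_of_mem_Icc (by norm_num)]; ring

theorem barPhi_nonneg (hnn : ∀ v, 0 ≤ Φ v) (hd : 0 ≤ deriv Φ 0) : 0 ≤ barPhi Φ u := by
  rcases lt_or_ge 1 u with h1 | h1
  · rw [barPhi_of_one_lt h1]; exact div_nonneg (hnn _) hd
  rcases lt_or_ge u (-1) with h2 | h2
  · rw [barPhi_of_lt_neg_one h2]; linarith [div_nonneg (hnn (-1 - u)) hd]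
  · rw [barPhi_of_mem_Icc ⟨h2, h1⟩]; linarith [div_nonneg (hnn 0) hd]

theorem barPhi_two_mul_zero_le (hconv : ConvexOn ℝ univ Φ) (hd : 0 ≤ deriv Φ 0) (u : ℝ) :
    2 * barPhi Φ 0 ≤ barPhi Φ (-u) + barPhi Φ u := by
  have outside : ∀ v, 1 < v → 2 * barPhi Φ 0 ≤ barPhi Φ (-v) + barPhi Φ v := by
    intro v hv
    rw [barPhi_zero, barPhi_of_one_lt hv, barPhi_of_lt_neg_one (u := -v) (by linarith),
      show -1 - -v = -(1 - v) by ring]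
    have hmid := div_le_div_of_nonneg_right (hconv.two_mul_apply_zero_le (1 - v)) hd
    rw [add_div, mul_div_assoc] at hmid
    linarith
  rcases lt_or_ge 1 u with h1 | h1
  · exact outside u h1
  rcases lt_or_ge u (-1) with h2 | h2
  · simpa only [neg_neg, add_comm] using outside (-u) (by linarith)
  · rw [barPhi_zero, barPhi_of_mem_Icc ⟨h2, h1⟩,
      barPhi_of_mem_Icc (u := -u) ⟨by linarith, by linarith⟩]
    linarith

end

theorem le_Tbar {Φ : ℝ → ℝ} (hnn : ∀ u, 0 ≤ Φ u) (hd : 0 ≤ deriv Φ 0) {t : ℝ}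
    (ht : t ∈ Icc (-1) 1) : t ≤ Tbar Φ t := by
  obtain ⟨ht1, ht2⟩ := ht
  have hbdd :
      BddBelow (range fun u ↦ (1 - t) / 2 * barPhi Φ (-u) + (1 + t) / 2 * barPhi Φ u) := by
    refine ⟨0, ?_⟩
    rintro _ ⟨u, rfl⟩
    exact add_nonneg (mul_nonneg (by linarith) (barPhi_nonneg hnn hd))
      (mul_nonneg (by linarith) (barPhi_nonneg hnn hd))
  have hle := ciInf_le hbdd 1
  rw [Tbar, barPhi_zero]
  rw [barPhi_one, barPhi_neg_one] at hle
  linarith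

theorem Tbar_zero {Φ : ℝ → ℝ} (hconv : ConvexOn ℝ univ Φ) (hd : 0 ≤ deriv Φ 0) :
    Tbar Φ 0 = 0 := by
  have hlower : ∀ u, barPhi Φ 0 ≤ (1 - 0) / 2 * barPhi Φ (-u) + (1 + 0) / 2 * barPhi Φ u := by
    intro u
    linarith [barPhi_two_mul_zero_le hconv hd u]
  have hinf : (⨅ u : ℝ, (1 - 0) / 2 * barPhi Φ (-u) + (1 + 0) / 2 * barPhi Φ u) = barPhi Φ 0 := by
    refine le_antisymm ?_ (le_ciInf hlower)
    refine (ciInf_le ⟨_, forall_mem_range.2 hlower⟩ 0).trans_eq ?_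
    rw [neg_zero]; ring
  rw [Tbar, hinf, sub_self]

theorem Tbar_linear_lower_bound_general (Φ : ℝ → ℝ)
    (hconv : ConvexOn ℝ Set.univ Φ)
    (hnn : ∀ u, 0 ≤ Φ u) (hd0 : 0 < deriv Φ 0) :
    (∀ t ∈ Set.Icc (0 : ℝ) 1, t ≤ Tbar Φ t) ∧ Tbar Φ 0 = 0 :=
  ⟨fun _ ht ↦ le_Tbar hnn hd0.le ⟨by linarith [ht.1], ht.2⟩, Tbar_zero hconv hd0.le⟩

/-- `T(t) ≥ t` for all `t ∈ [0, 1]`, and `T(0) = 0`. -/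
theorem Tbar_linear_lower_bound (Φ : ℝ → ℝ)
    (hconv : ConvexOn ℝ Set.univ Φ) (hdiff : Differentiable ℝ Φ)
    (hnn : ∀ u, 0 ≤ Φ u) (hd0 : 0 < deriv Φ 0) :
    (∀ t ∈ Set.Icc (0 : ℝ) 1, t ≤ Tbar Φ t) ∧ Tbar Φ 0 = 0 :=
  Tbar_linear_lower_bound_general Φ hconv hnn hd0
end

section
/- For every u ∈ ℝ, (1/2)·(Φ̄(−u) + Φ̄(u)) ≥ 1 + Φ(0)/Φ'(0), with equality for every u ∈ [−1, 1]; consequently, the infimum over u ∈ ℝ of (1/2)·(Φ̄(−u) + Φ̄(u)) equals 1 + Φ(0)/Φ'(0) = Φ̄(0). -/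
/-- for every `u ∈ ℝ`, `(1/2)·(Φ̄(-u) + Φ̄(u)) ≥ 1 + Φ(0)/Φ'(0)`, with
equality on `[-1, 1]`; hence `inf_{u ∈ ℝ} (1/2)·(Φ̄(-u) + Φ̄(u)) = 1 + Φ(0)/Φ'(0) = Φ̄(0)`. -/
theorem barPhi_symmetric_average_bound (Φ : ℝ → ℝ)
    (hconv : ConvexOn ℝ Set.univ Φ) (hdiff : Differentiable ℝ Φ)
    (hnn : ∀ u, 0 ≤ Φ u) (hd0 : 0 < deriv Φ 0) :
    (∀ u : ℝ, 1 + Φ 0 / deriv Φ 0 ≤ 1 / 2 * (barPhi Φ (-u) + barPhi Φ u)) ∧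
    (∀ u ∈ Set.Icc (-1 : ℝ) 1,
      1 / 2 * (barPhi Φ (-u) + barPhi Φ u) = 1 + Φ 0 / deriv Φ 0) ∧
    (⨅ u : ℝ, 1 / 2 * (barPhi Φ (-u) + barPhi Φ u)) = 1 + Φ 0 / deriv Φ 0 ∧
    (1 : ℝ) + Φ 0 / deriv Φ 0 = barPhi Φ 0 := by
  set d := deriv Φ 0 with hd
  have hmid : ∀ a : ℝ, 2 * Φ 0 ≤ Φ a + Φ (-a) := by
    intro a
    have h := hconv.2 (Set.mem_univ a) (Set.mem_univ (-a))
      (by norm_num : (0:ℝ) ≤ 1/2) (by norm_num : (0:ℝ) ≤ 1/2) (by norm_num)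
    simp only [smul_eq_mul] at h
    have h0 : (1/2 : ℝ) * a + 1/2 * (-a) = 0 := by ring
    rw [h0] at h
    linarith
  have key : ∀ A B : ℝ, 2 * Φ 0 ≤ A + B → Φ 0 / d ≤ 1/2 * (A/d + B/d) := by
    intro A B hAB
    have h1 : (2 * Φ 0) / d ≤ (A + B) / d := by gcongr
    have e1 : (2 * Φ 0) / d = 2 * (Φ 0 / d) := by ring
    have e2 : (A + B) / d = A/d + B/d := by ring
    linarith
  have hge : ∀ u : ℝ, 1 + Φ 0 / d ≤ 1 / 2 * (barPhi Φ (-u) + barPhi Φ u) := by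
    intro u
    unfold barPhi
    rw [← hd]
    rcases lt_trichotomy u (-1) with h | h | h
    · rw [if_pos (by linarith : 1 < -u), if_neg (by linarith), if_pos h]
      have hAB : 2 * Φ 0 ≤ Φ (1 - -u) + Φ (-1 - u) := by
        have := hmid (1 - -u)
        have e : -(1 - -u) = -1 - u := by ring
        rwa [e] at this
      have := key _ _ hAB
      linarith
    · subst h
      norm_num
      linarith
    · rcases le_or_gt u 1 with h2 | h2
      · rw [if_neg (by linarith), if_neg (by linarith), if_neg (by linarith),
          if_neg (by linarith)]
        have : 1/2 * ((-(-u) + 1 + Φ 0 / d) + (-u + 1 + Φ 0 / d)) = 1 + Φ 0 / d := by ring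
        linarith
      · rw [if_neg (by linarith : ¬ 1 < -u), if_pos (by linarith : -u < -1),
          if_pos h2]
        have hAB : 2 * Φ 0 ≤ Φ (-1 - -u) + Φ (1 - u) := by
          have := hmid (-1 - -u)
          have e : -(-1 - -u) = 1 - u := by ring
          rwa [e] at this
        have := key _ _ hAB
        linarith
  have heq : ∀ u ∈ Set.Icc (-1 : ℝ) 1,
      1 / 2 * (barPhi Φ (-u) + barPhi Φ u) = 1 + Φ 0 / d := by
    rintro u ⟨h1, h2⟩
    unfold barPhi
    rw [← hd]
    rw [if_neg (by linarith : ¬ 1 < -u), if_neg (by linarith : ¬ -u < -1),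
      if_neg (by linarith : ¬ 1 < u), if_neg (by linarith : ¬ u < -1)]
    ring
  have hbdd : BddBelow (Set.range fun u : ℝ => 1 / 2 * (barPhi Φ (-u) + barPhi Φ u)) := by
    refine ⟨1 + Φ 0 / d, ?_⟩
    rintro y ⟨u, rfl⟩
    exact hge u
  refine ⟨hge, heq, ?_, ?_⟩
  · refine le_antisymm ?_ (le_ciInf hge)
    have h0 := ciInf_le hbdd (0 : ℝ)
    calc (⨅ u : ℝ, 1 / 2 * (barPhi Φ (-u) + barPhi Φ u))
        ≤ 1 / 2 * (barPhi Φ (-0) + barPhi Φ 0) := h0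
      _ = 1 + Φ 0 / d := heq 0 (by norm_num)
  · unfold barPhi
    rw [← hd]
    norm_num
end
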